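/- arXiv:1310.3787 — 3 statements merged into one kernel-verified Lean document; each statement's English description precedes it below -/
import Mathlib

section
/- Under the assumptions of the convex AG convergence theorem ($\Psi$ convex with $L_\Psi$-Lipschitz gradient, minimizer $x^*$, stepsizes with $\alpha_k\lambda_k \le \beta_k < 1/L_\Psi$ and $\alpha_k/(\lambda_k\Gamma_k)$ nonincreasing), one also has the gradient bound $\min_{k=1,\ldots,N}\|\nabla\Psi(x_k^{md})\|^2 \le \frac{\|x_0 - x^*\|^2}{\lambda_1\sum_{k=1}^N \Gamma_k^{-1}\beta_k(1 - L_\Psi\beta_k)}$ for all $N \ge 1$. -/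
/-! Each AG step satisfies
`Ψ(x^ag_k) - Ψ* ≤ (1 - α_k)(Ψ(x^ag_{k-1}) - Ψ*) + α_k/(2λ_k)(‖x_{k-1} - x*‖² - ‖x_k - x*‖²)
  - β_k(1 - L β_k)‖∇Ψ(x^md_k)‖²/2`:
the descent lemma bounds `Ψ(x^ag_k)` by `Ψ(x^md_k)`, convexity bounds `Ψ(x^md_k)` by the
`(1 - α_k, α_k)` combination of `Ψ(x^ag_{k-1})` and `Ψ*`, and `α_k λ_k ≤ β_k` absorbs the remaining
gradient term. Dividing by `Γ_k` and using that `α_k/(λ_k Γ_k)` is nonincreasing, these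
inequalities telescope to `∑_k Γ_k⁻¹ β_k(1 - L β_k)‖∇Ψ(x^md_k)‖² ≤ ‖x_0 - x*‖²/λ_1`, and the
smallest gradient norm is at most the weighted average. -/

open Finset InnerProductSpace

section Gradient

variable {F : Type*} [NormedAddCommGroup F] [InnerProductSpace ℝ F] [CompleteSpace F]
  {f : F → ℝ}

theorem HasGradientAt.hasDerivAt_comp_lineMap {f' a b : F} {t : ℝ}
    (h : HasGradientAt f f' (AffineMap.lineMap a b t)) :
    HasDerivAt (f ∘ AffineMap.lineMap a b) ⟪f', b - a⟫_ℝ t := by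
  simpa using h.hasFDerivAt.comp_hasDerivAt t AffineMap.hasDerivAt_lineMap

theorem ConvexOn.add_inner_gradient_le (hf : ConvexOn ℝ Set.univ f) {f' z : F}
    (h : HasGradientAt f f' z) (u : F) :
    f z + ⟪f', u - z⟫_ℝ ≤ f u := by
  have hline : ConvexOn ℝ Set.univ (f ∘ (AffineMap.lineMap z u : ℝ →ᵃ[ℝ] F)) := by
    simpa using hf.comp_affineMap (AffineMap.lineMap z u : ℝ →ᵃ[ℝ] F)
  have hderiv := HasGradientAt.hasDerivAt_comp_lineMap (t := 0) (b := u) (by simpa using h)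
  have := hline.le_slope_of_hasDerivAt (Set.mem_univ 0) (Set.mem_univ 1) one_pos hderiv
  simp only [slope_def_field, Function.comp_apply, AffineMap.lineMap_apply_one,
    AffineMap.lineMap_apply_zero, sub_zero, div_one] at this
  linarith

variable {g : F → F} {L : ℝ}

theorem le_add_inner_gradient_add_sq (hg : ∀ x, HasGradientAt f (g x) x)
    (hL : ∀ x y, ‖g x - g y‖ ≤ L * ‖x - y‖) (c y : F) :
    f y ≤ f c + ⟪g c, y - c⟫_ℝ + L / 2 * ‖y - c‖ ^ 2 := by
  set p : ℝ →ᵃ[ℝ] F := AffineMap.lineMap c y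
  set ψ : ℝ → ℝ := fun t => f (p t) - t * ⟪g c, y - c⟫_ℝ - L / 2 * ‖y - c‖ ^ 2 * t ^ 2
  have hψ' (t : ℝ) : HasDerivAt ψ
      (⟪g (p t), y - c⟫_ℝ - ⟪g c, y - c⟫_ℝ - L / 2 * ‖y - c‖ ^ 2 * (2 * t)) t := by
    refine (((hg (p t)).hasDerivAt_comp_lineMap).sub ?_).sub ?_
    · simpa using (hasDerivAt_id t).mul_const ⟪g c, y - c⟫_ℝ
    · simpa using (hasDerivAt_pow 2 t).const_mul (L / 2 * ‖y - c‖ ^ 2)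
  have hanti : AntitoneOn ψ (Set.Ici 0) := by
    refine antitoneOn_of_hasDerivWithinAt_nonpos (convex_Ici 0)
      (fun t _ => (hψ' t).continuousAt.continuousWithinAt)
      (fun t _ => (hψ' t).hasDerivWithinAt) fun t ht => ?_
    rw [interior_Ici] at ht
    have hpt : p t - c = t • (y - c) := AffineMap.lineMap_vsub_left c y t
    have : ⟪g (p t) - g c, y - c⟫_ℝ ≤ L * ‖y - c‖ ^ 2 * t :=
      calc ⟪g (p t) - g c, y - c⟫_ℝ ≤ ‖g (p t) - g c‖ * ‖y - c‖ := real_inner_le_norm _ _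
        _ ≤ L * ‖p t - c‖ * ‖y - c‖ := by gcongr; exact hL _ _
        _ = L * ‖y - c‖ ^ 2 * t := by
          rw [hpt, norm_smul, Real.norm_of_nonneg ht.le]; ring
    rw [inner_sub_left] at this
    linarith
  have := hanti Set.self_mem_Ici (Set.mem_Ici.2 zero_le_one) zero_le_one
  simp only [ψ, p, AffineMap.lineMap_apply_one, AffineMap.lineMap_apply_zero] at this
  linarith

theorem sub_smul_gradient_le (hg : ∀ x, HasGradientAt f (g x) x)
    (hL : ∀ x y, ‖g x - g y‖ ≤ L * ‖x - y‖) (z : F) (b : ℝ) :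
    f (z - b • g z) ≤ f z - b * (1 - L * b / 2) * ‖g z‖ ^ 2 := by
  have := le_add_inner_gradient_add_sq hg hL z (z - b • g z)
  rw [sub_sub_cancel_left, inner_neg_right, real_inner_smul_right, real_inner_self_eq_norm_sq,
    norm_neg, norm_smul, mul_pow, Real.norm_eq_abs, sq_abs] at this
  linarith

theorem ConvexOn.le_convex_comb_add_inner (hf : ConvexOn ℝ Set.univ f) {G y w z : F}
    (hG : HasGradientAt f G z) {a : ℝ} (ha0 : 0 ≤ a) (ha1 : a ≤ 1)
    (hz : z = (1 - a) • y + a • w) (x : F) :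
    f z ≤ (1 - a) * f y + a * f x + a * ⟪G, w - x⟫_ℝ := by
  have hy := hf.add_inner_gradient_le hG y
  have hx := hf.add_inner_gradient_le hG x
  have hcomb : (1 - a) • (y - z) + a • (x - z) = -(a • (w - x)) := by subst hz; module
  have hinner : (1 - a) * ⟪G, y - z⟫_ℝ + a * ⟪G, x - z⟫_ℝ = -(a * ⟪G, w - x⟫_ℝ) := by
    rw [← real_inner_smul_right, ← real_inner_smul_right, ← inner_add_right, hcomb,
      inner_neg_right, real_inner_smul_right]
  nlinarith

theorem ag_step_le (hg : ∀ x, HasGradientAt f (g x) x) (hL : ∀ x y, ‖g x - g y‖ ≤ L * ‖x - y‖)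
    (hf : ConvexOn ℝ Set.univ f) {a lam b : ℝ} (ha0 : 0 ≤ a) (ha1 : a ≤ 1) (hlam : 0 < lam)
    (hab : a * lam ≤ b) {y w z : F} (hz : z = (1 - a) • y + a • w) (xstar : F) :
    f (z - b • g z) - f xstar ≤ (1 - a) * (f y - f xstar)
      + a / (2 * lam) * (‖w - xstar‖ ^ 2 - ‖w - lam • g z - xstar‖ ^ 2)
      - b * (1 - L * b) * ‖g z‖ ^ 2 / 2 := by
  have hdescent := sub_smul_gradient_le hg hL z b
  have hconvex := hf.le_convex_comb_add_inner (hg z) ha0 ha1 hz xstar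
  have hdist : ‖w - xstar‖ ^ 2 - ‖w - lam • g z - xstar‖ ^ 2
      = 2 * lam * ⟪g z, w - xstar⟫_ℝ - lam ^ 2 * ‖g z‖ ^ 2 := by
    rw [show w - lam • g z - xstar = (w - xstar) - lam • g z by abel, norm_sub_sq_real (w - xstar),
      real_inner_smul_right, real_inner_comm, norm_smul, mul_pow, Real.norm_eq_abs, sq_abs]
    ring
  have hsplit : a / (2 * lam) * (2 * lam * ⟪g z, w - xstar⟫_ℝ - lam ^ 2 * ‖g z‖ ^ 2)
      = a * ⟪g z, w - xstar⟫_ℝ - a * lam * ‖g z‖ ^ 2 / 2 := by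
    field_simp
  have hstep : a * lam * ‖g z‖ ^ 2 ≤ b * ‖g z‖ ^ 2 := by gcongr
  rw [hdist, hsplit]
  linarith

end Gradient

theorem exists_le_div_sum_of_sum_mul_le {ι : Type*} {s : Finset ι} (hs : s.Nonempty)
    {w a : ι → ℝ} (hw : ∀ i ∈ s, 0 < w i) {C : ℝ} (h : ∑ i ∈ s, w i * a i ≤ C) :
    ∃ i ∈ s, a i ≤ C / ∑ i ∈ s, w i := by
  have hW : 0 < ∑ i ∈ s, w i := sum_pos hw hs
  have hC : ∑ i ∈ s, w i * (C / ∑ i ∈ s, w i) = C := by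
    rw [← sum_mul, mul_div_cancel₀ _ hW.ne']
  obtain ⟨i, hi, hle⟩ := exists_le_of_sum_le hs (h.trans hC.ge)
  exact ⟨i, hi, le_of_mul_le_mul_left hle (hw i hi)⟩

section Parameters

variable {α Γ : ℕ → ℝ}

theorem ag_alpha_mem_Ioc (hα1 : α 1 = 1) (hα : ∀ k ≥ 2, α k ∈ Set.Ioo (0:ℝ) 1) {k : ℕ}
    (hk : 1 ≤ k) : α k ∈ Set.Ioc 0 1 := by
  obtain rfl | hk2 : k = 1 ∨ 2 ≤ k := by omega
  · simp [hα1]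
  · exact Set.Ioo_subset_Ioc_self (hα k hk2)

theorem ag_Gamma_pos (hΓ1 : Γ 1 = 1) (hα : ∀ k ≥ 2, α k ∈ Set.Ioo (0:ℝ) 1)
    (hΓ : ∀ k ≥ 2, Γ k = (1 - α k) * Γ (k - 1)) {k : ℕ} (hk : 1 ≤ k) : 0 < Γ k := by
  induction k, hk using Nat.le_induction with
  | base => simp [hΓ1]
  | succ k hk ih =>
    rw [hΓ (k + 1) (by omega), Nat.add_sub_cancel]
    exact mul_pos (sub_pos.2 (hα (k + 1) (by omega)).2) ih

theorem ag_weighted_sum_le {lam δ Δ E : ℕ → ℝ} (hα1 : α 1 = 1) (hΓ1 : Γ 1 = 1)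
    (hΓ : ∀ k ≥ 2, Γ k = (1 - α k) * Γ (k - 1)) (hΓpos : ∀ k ≥ 1, 0 < Γ k)
    (hαnonneg : ∀ k ≥ 1, 0 ≤ α k) (hlam : ∀ k ≥ 1, 0 < lam k)
    (hmono : ∀ k ≥ 1, α (k + 1) / (lam (k + 1) * Γ (k + 1)) ≤ α k / (lam k * Γ k))
    (hδ : ∀ k ≥ 1, 0 ≤ δ k) (hΔ : ∀ k ≥ 1, 0 ≤ Δ k)
    (hrec : ∀ k ≥ 1,
      δ k ≤ (1 - α k) * δ (k - 1) + α k / (2 * lam k) * (Δ (k - 1) - Δ k) - E k / 2)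
    {N : ℕ} (hN : 1 ≤ N) :
    ∑ k ∈ Icc 1 N, (Γ k)⁻¹ * E k ≤ Δ 0 / lam 1 := by
  -- The first two terms form a Lyapunov function that drops by at least `E M / Γ M` at step `M`.
  have hpotential : ∀ M ≥ 1, 2 * δ M / Γ M + α M / (lam M * Γ M) * Δ M
      + ∑ k ∈ Icc 1 M, (Γ k)⁻¹ * E k ≤ Δ 0 / lam 1 := by
    intro M hM
    induction M, hM using Nat.le_induction with
    | base =>
      have h1 := hrec 1 le_rfl
      simp only [hα1, hΓ1, Icc_self, sum_singleton, sub_self, zero_mul, zero_add,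
        Nat.sub_self] at h1 ⊢
      have hl := hlam 1 le_rfl
      field_simp at h1 ⊢
      linarith
    | succ M hM ih =>
      have hΓsucc : Γ (M + 1) = (1 - α (M + 1)) * Γ M := by
        simpa using hΓ (M + 1) (by omega)
      have hscaled : 2 * δ (M + 1) / Γ (M + 1) ≤ 2 * δ M / Γ M
          + α (M + 1) / (lam (M + 1) * Γ (M + 1)) * (Δ M - Δ (M + 1))
          - (Γ (M + 1))⁻¹ * E (M + 1) := by
        have hpos := hΓpos (M + 1) (by omega)
        have hne : 1 - α (M + 1) ≠ 0 := left_ne_zero_of_mul (hΓsucc ▸ hpos.ne')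
        have hrecM := hrec (M + 1) (by omega)
        rw [Nat.add_sub_cancel] at hrecM
        calc 2 * δ (M + 1) / Γ (M + 1)
            ≤ 2 * ((1 - α (M + 1)) * δ M + α (M + 1) / (2 * lam (M + 1)) * (Δ M - Δ (M + 1))
              - E (M + 1) / 2) / Γ (M + 1) := by gcongr
          _ = _ := by
            rw [hΓsucc]
            field_simp [hne, (hΓpos M hM).ne', (hlam (M + 1) (by omega)).ne']
      have hweight : α (M + 1) / (lam (M + 1) * Γ (M + 1)) * Δ M
          ≤ α M / (lam M * Γ M) * Δ M := mul_le_mul_of_nonneg_right (hmono M hM) (hΔ M hM)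
      rw [sum_Icc_succ_top (by omega)]
      linarith
  have hw : 0 ≤ α N / (lam N * Γ N) * Δ N :=
    mul_nonneg (div_nonneg (hαnonneg N hN) (mul_pos (hlam N hN) (hΓpos N hN)).le) (hΔ N hN)
  have hδN : 0 ≤ 2 * δ N / Γ N := div_nonneg (by linarith [hδ N hN]) (hΓpos N hN).le
  linarith [hpotential N hN]

end Parameters

theorem ag_convex_gradient_bound_general {n : ℕ}
    (Ψ : EuclideanSpace ℝ (Fin n) → ℝ) (g : EuclideanSpace ℝ (Fin n) → EuclideanSpace ℝ (Fin n))
    (LΨ : ℝ)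
    (hg : ∀ x, HasGradientAt Ψ (g x) x)
    (hL : ∀ x y, ‖g x - g y‖ ≤ LΨ * ‖x - y‖)
    (hconv : ConvexOn ℝ Set.univ Ψ)
    (xstar : EuclideanSpace ℝ (Fin n)) (hmin : ∀ z, Ψ xstar ≤ Ψ z)
    (α β lam Γ : ℕ → ℝ)
    (hα1 : α 1 = 1) (hα : ∀ k ≥ 2, α k ∈ Set.Ioo (0:ℝ) 1)
    (hΓ1 : Γ 1 = 1) (hΓ : ∀ k ≥ 2, Γ k = (1 - α k) * Γ (k - 1))
    (hstep : ∀ k ≥ 1, α k * lam k ≤ β k ∧ β k < 1 / LΨ)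
    (hlam : ∀ k ≥ 1, 0 < lam k)
    (hmono : ∀ k ≥ 1, α (k + 1) / (lam (k + 1) * Γ (k + 1)) ≤ α k / (lam k * Γ k))
    (x xag xmd : ℕ → EuclideanSpace ℝ (Fin n))
    (hmd : ∀ k ≥ 1, xmd k = (1 - α k) • xag (k - 1) + α k • x (k - 1))
    (hx : ∀ k ≥ 1, x k = x (k - 1) - lam k • g (xmd k))
    (hxag : ∀ k ≥ 1, xag k = xmd k - β k • g (xmd k)) :
    ∀ N ≥ 1, ∃ k ∈ Finset.Icc 1 N,
      ‖g (xmd k)‖ ^ 2 ≤ ‖x 0 - xstar‖ ^ 2 /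
        (lam 1 * ∑ j ∈ Finset.Icc 1 N, (Γ j)⁻¹ * β j * (1 - LΨ * β j)) := by
  have hαmem k (hk : 1 ≤ k) := ag_alpha_mem_Ioc hα1 hα hk
  have hΓpos k (hk : 1 ≤ k) := ag_Gamma_pos hΓ1 hα hΓ hk
  have hβpos k (hk : 1 ≤ k) : 0 < β k :=
    (mul_pos (hαmem k hk).1 (hlam k hk)).trans_le (hstep k hk).1
  have hLβ k (hk : 1 ≤ k) : LΨ * β k < 1 := by
    have hLpos : 0 < LΨ := one_div_pos.1 ((hβpos k hk).trans (hstep k hk).2)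
    exact (lt_div_iff₀' hLpos).1 (hstep k hk).2
  have hrec k (hk : 1 ≤ k) : Ψ (xag k) - Ψ xstar ≤ (1 - α k) * (Ψ (xag (k - 1)) - Ψ xstar)
      + α k / (2 * lam k) * (‖x (k - 1) - xstar‖ ^ 2 - ‖x k - xstar‖ ^ 2)
      - β k * (1 - LΨ * β k) * ‖g (xmd k)‖ ^ 2 / 2 := by
    rw [hxag k hk, hx k hk]
    exact ag_step_le hg hL hconv (hαmem k hk).1.le (hαmem k hk).2 (hlam k hk) (hstep k hk).1
      (hmd k hk) xstar
  intro N hN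
  have hsum := ag_weighted_sum_le (E := fun k => β k * (1 - LΨ * β k) * ‖g (xmd k)‖ ^ 2)
    hα1 hΓ1 hΓ hΓpos (fun k hk => (hαmem k hk).1.le) hlam hmono
    (fun k _ => sub_nonneg.2 (hmin (xag k))) (fun k _ => sq_nonneg ‖x k - xstar‖) hrec hN
  obtain ⟨k, hk, hle⟩ := exists_le_div_sum_of_sum_mul_le (nonempty_Icc.2 hN)
    (w := fun j => (Γ j)⁻¹ * β j * (1 - LΨ * β j)) (a := fun j => ‖g (xmd j)‖ ^ 2)
    (fun j hj => by
      have hj1 := (mem_Icc.1 hj).1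
      exact mul_pos (mul_pos (inv_pos.2 (hΓpos j hj1)) (hβpos j hj1)) (sub_pos.2 (hLβ j hj1)))
    (by simpa only [mul_assoc] using hsum)
  exact ⟨k, hk, by rwa [div_div] at hle⟩

theorem ag_convex_gradient_bound {n : ℕ}
    (Ψ : EuclideanSpace ℝ (Fin n) → ℝ) (g : EuclideanSpace ℝ (Fin n) → EuclideanSpace ℝ (Fin n))
    (LΨ : ℝ)
    (hg : ∀ x, HasGradientAt Ψ (g x) x)
    (hL : ∀ x y, ‖g x - g y‖ ≤ LΨ * ‖x - y‖)
    (hconv : ConvexOn ℝ Set.univ Ψ)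
    (xstar : EuclideanSpace ℝ (Fin n)) (hmin : ∀ z, Ψ xstar ≤ Ψ z)
    (α β lam Γ : ℕ → ℝ)
    (hα1 : α 1 = 1) (hα : ∀ k ≥ 2, α k ∈ Set.Ioo (0:ℝ) 1)
    (hΓ1 : Γ 1 = 1) (hΓ : ∀ k ≥ 2, Γ k = (1 - α k) * Γ (k - 1))
    (hstep : ∀ k ≥ 1, α k * lam k ≤ β k ∧ β k < 1 / LΨ)
    (hlam : ∀ k ≥ 1, 0 < lam k)
    (hmono : ∀ k ≥ 1, α (k + 1) / (lam (k + 1) * Γ (k + 1)) ≤ α k / (lam k * Γ k))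
    (x xag xmd : ℕ → EuclideanSpace ℝ (Fin n))
    (hag0 : xag 0 = x 0)
    (hmd : ∀ k ≥ 1, xmd k = (1 - α k) • xag (k - 1) + α k • x (k - 1))
    (hx : ∀ k ≥ 1, x k = x (k - 1) - lam k • g (xmd k))
    (hxag : ∀ k ≥ 1, xag k = xmd k - β k • g (xmd k)) :
    ∀ N ≥ 1, ∃ k ∈ Finset.Icc 1 N,
      ‖g (xmd k)‖ ^ 2 ≤ ‖x 0 - xstar‖ ^ 2 /
        (lam 1 * ∑ j ∈ Finset.Icc 1 N, (Γ j)⁻¹ * β j * (1 - LΨ * β j)) :=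
  ag_convex_gradient_bound_general Ψ g LΨ hg hL hconv xstar hmin α β lam Γ hα1 hα hΓ1 hΓ hstep hlam
    hmono x xag xmd hmd hx hxag
end

section
/- Let $\Psi: \mathbb{R}^n \to \mathbb{R}$ be convex, differentiable with $L_\Psi$-Lipschitz gradient, with minimizer $x^*$. Running the AG iteration with $\alpha_k = 2/(k+1)$, $\beta_k = 1/(2L_\Psi)$, and $\lambda_k = k\beta_k/2$ yields, for any $N \ge 1$: $\Psi(x_N^{ag}) - \Psi(x^*) \le \frac{4L_\Psi\|x_0 - x^*\|^2}{N(N+1)}$ and $\min_{k=1,\ldots,N}\|\nabla\Psi(x_k^{md})\|^2 \le \frac{96 L_\Psi^2 \|x_0 - x^*\|^2}{N^2(N+1)}$. -/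
open Finset

open scoped RealInnerProductSpace

/-!
The potential `Φ k = 8 k (k + 1) L (Ψ (x_k^ag) - Ψ x*) + 32 L² ‖x_k - x*‖²` satisfies
`Φ k + k (k + 1) ‖∇Ψ (x_k^md)‖² ≤ Φ (k - 1)`. This combines three facts at `x_k^md`: the
gradient step of length `1 / (2 L)` lowers `Ψ` by `3 / (8 L) ‖∇Ψ‖²` (descent lemma), the
first-order convexity inequality towards `x_{k-1}^ag` and `x*`, and the expansion of
`‖x_k - x*‖²`. Telescoping from `Φ 0 = 32 L² ‖x_0 - x*‖²` bounds the gap, and, since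
`∑_{k ≤ N} k (k + 1) = N (N + 1) (N + 2) / 3`, also the smallest squared gradient norm.
-/

theorem add_sum_Icc_le_of_forall_succ {a b : ℕ → ℝ} (h : ∀ k, a (k + 1) + b (k + 1) ≤ a k)
    (N : ℕ) : a N + ∑ k ∈ Icc 1 N, b k ≤ a 0 := by
  induction N with
  | zero => simp
  | succ N ih =>
    rw [sum_Icc_succ_top (by omega)]
    linarith [h N]

theorem sum_Icc_mul_add_one (N : ℕ) :
    ∑ k ∈ Icc 1 N, (k : ℝ) * (k + 1) = N * (N + 1) * (N + 2) / 3 := by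
  induction N with
  | zero => simp
  | succ N ih =>
    rw [sum_Icc_succ_top (by omega), ih]
    push_cast
    ring

theorem Finset.exists_le_of_sum_mul_le_mul_sum {ι : Type*} {s : Finset ι} (hs : s.Nonempty)
    {w f : ι → ℝ} (hw : ∀ i ∈ s, 0 < w i) {c : ℝ}
    (h : ∑ i ∈ s, w i * f i ≤ c * ∑ i ∈ s, w i) : ∃ i ∈ s, f i ≤ c := by
  rw [mul_sum] at h
  obtain ⟨i, hi, hle⟩ :=
    exists_le_of_sum_le hs (h.trans_eq (sum_congr rfl fun i _ => mul_comm _ _))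
  exact ⟨i, hi, le_of_mul_le_mul_left hle (hw i hi)⟩

section

variable {E : Type*} [NormedAddCommGroup E] [InnerProductSpace ℝ E] [CompleteSpace E]
  {f : E → ℝ} {f' : E} {g : E → E} {L : ℝ}

theorem HasGradientAt.hasDerivAt_add_smul {a v : E} {t : ℝ}
    (hf : HasGradientAt f f' (a + t • v)) :
    HasDerivAt (fun s : ℝ => f (a + s • v)) ⟪f', v⟫ t := by
  have hline : HasDerivAt (fun s : ℝ => a + s • v) v t := by
    simpa using ((hasDerivAt_id t).smul_const v).const_add a
  simpa [Function.comp_def] using hf.hasFDerivAt.comp_hasDerivAt t hline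

theorem ConvexOn.add_inner_le_of_hasGradientAt (hf : ConvexOn ℝ Set.univ f)
    {a : E} (hfa : HasGradientAt f f' a) (b : E) : f a + ⟪f', b - a⟫ ≤ f b := by
  have hline : ConvexOn ℝ Set.univ (fun t : ℝ => f (a + t • (b - a))) := by
    have h := hf.comp_affineMap (AffineMap.lineMap a b : ℝ →ᵃ[ℝ] E)
    rw [Set.preimage_univ] at h
    simpa [Function.comp_def, AffineMap.lineMap_apply_module', add_comm] using h
  have hderiv : HasDerivAt (fun t : ℝ => f (a + t • (b - a))) ⟪f', b - a⟫ 0 :=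
    HasGradientAt.hasDerivAt_add_smul (by simpa using hfa)
  have := hline.le_slope_of_hasDerivAt (Set.mem_univ 0) (Set.mem_univ 1) one_pos hderiv
  simp only [slope_def_field, one_smul, add_sub_cancel, zero_smul, add_zero, sub_zero,
    div_one] at this
  linarith

theorem le_add_inner_add_of_lipschitz_gradient (hg : ∀ x, HasGradientAt f (g x) x)
    (hL : ∀ x y, ‖g x - g y‖ ≤ L * ‖x - y‖) (a b : E) :
    f b ≤ f a + ⟪g a, b - a⟫ + L / 2 * ‖b - a‖ ^ 2 := by
  set v := b - a
  have hderiv : ∀ t : ℝ, HasDerivAt (fun s : ℝ => f (a + s • v)) ⟪g (a + t • v), v⟫ t :=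
    fun t => (hg _).hasDerivAt_add_smul
  have hbound : ∀ t : ℝ, HasDerivAt (fun s : ℝ => f a + s * ⟪g a, v⟫ + L / 2 * s ^ 2 * ‖v‖ ^ 2)
      (⟪g a, v⟫ + L * t * ‖v‖ ^ 2) t := by
    intro t
    refine ((((hasDerivAt_id t).mul_const ⟪g a, v⟫).const_add (f a)).add
      (((hasDerivAt_pow 2 t).const_mul (L / 2)).mul_const (‖v‖ ^ 2))).congr_deriv ?_
    simp only [Nat.cast_ofNat, Nat.add_one_sub_one, pow_one]
    ring
  have key := image_le_of_deriv_right_le_deriv_boundary (a := 0) (b := 1)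
    (fun t _ => (hderiv t).continuousAt.continuousWithinAt)
    (fun t _ => (hderiv t).hasDerivWithinAt)
    (by simp) (fun t _ => (hbound t).continuousAt.continuousWithinAt)
    (fun t _ => (hbound t).hasDerivWithinAt) ?_ (Set.right_mem_Icc.2 zero_le_one)
  · simpa [v] using key
  intro t ht
  have ht0 : 0 ≤ t := ht.1
  calc ⟪g (a + t • v), v⟫ = ⟪g a, v⟫ + ⟪g (a + t • v) - g a, v⟫ := by
        rw [inner_sub_left]; ring
    _ ≤ ⟪g a, v⟫ + ‖g (a + t • v) - g a‖ * ‖v‖ := by gcongr; exact real_inner_le_norm _ _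
    _ ≤ ⟪g a, v⟫ + L * ‖(a + t • v) - a‖ * ‖v‖ := by gcongr; exact hL _ _
    _ = ⟪g a, v⟫ + L * t * ‖v‖ ^ 2 := by
        rw [add_sub_cancel_left, norm_smul, Real.norm_of_nonneg ht0]; ring

theorem apply_sub_smul_gradient_le (hg : ∀ x, HasGradientAt f (g x) x)
    (hL : ∀ x y, ‖g x - g y‖ ≤ L * ‖x - y‖) (a : E) (β : ℝ) :
    f (a - β • g a) ≤ f a - β * (1 - L * β / 2) * ‖g a‖ ^ 2 := by
  have h := le_add_inner_add_of_lipschitz_gradient hg hL a (a - β • g a)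
  rw [sub_sub_cancel_left, inner_neg_right, real_inner_smul_right, real_inner_self_eq_norm_sq,
    norm_neg, norm_smul, Real.norm_eq_abs, mul_pow, sq_abs] at h
  linarith

theorem ConvexOn.le_combo_add_inner_of_hasGradientAt (hf : ConvexOn ℝ Set.univ f)
    {m : E} (hfm : HasGradientAt f f' m) {α : ℝ} (hα₀ : 0 ≤ α) (hα₁ : α ≤ 1) {y u : E}
    (hm : m = (1 - α) • y + α • u) (z : E) :
    f m ≤ (1 - α) * f y + α * f z + α * ⟪f', u - z⟫ := by
  have hy := hf.add_inner_le_of_hasGradientAt hfm y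
  have hz := hf.add_inner_le_of_hasGradientAt hfm z
  have hcombo : (1 - α) * ⟪f', y - m⟫ + α * ⟪f', z - m⟫ = -(α * ⟪f', u - z⟫) := by
    simp only [← real_inner_smul_right, ← inner_add_right, ← inner_neg_right, hm]
    congr 1
    module
  linarith [mul_le_mul_of_nonneg_left hy (sub_nonneg.2 hα₁), mul_le_mul_of_nonneg_left hz hα₀]

theorem ag_potential_step (hL₀ : 0 < L) (hg : ∀ x, HasGradientAt f (g x) x)
    (hL : ∀ x y, ‖g x - g y‖ ≤ L * ‖x - y‖) (hf : ConvexOn ℝ Set.univ f)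
    {c : ℝ} (hc : 1 ≤ c) {y u m u' y' : E}
    (hm : m = (1 - 2 / (c + 1)) • y + (2 / (c + 1)) • u)
    (hu' : u' = u - (c / (4 * L)) • g m) (hy' : y' = m - (1 / (2 * L)) • g m) (z : E) :
    8 * c * (c + 1) * L * (f y' - f z) + 32 * L ^ 2 * ‖u' - z‖ ^ 2 + c * (c + 1) * ‖g m‖ ^ 2
      ≤ 8 * c * (c - 1) * L * (f y - f z) + 32 * L ^ 2 * ‖u - z‖ ^ 2 := by
  have hc₁ : 0 < c + 1 := by linarith
  have hdescent : f y' ≤ f m - 3 / (8 * L) * ‖g m‖ ^ 2 := by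
    have h := apply_sub_smul_gradient_le hg hL m (1 / (2 * L))
    rw [← hy'] at h
    convert h using 2
    field_simp
    ring
  have hcombo := hf.le_combo_add_inner_of_hasGradientAt (hg m) (by positivity)
    ((div_le_one hc₁).2 (by linarith)) hm z
  have hgap : 8 * c * (c + 1) * L * (f y' - f z)
      ≤ 8 * c * (c - 1) * L * (f y - f z) + 16 * c * L * ⟪g m, u - z⟫
        - 3 * c * (c + 1) * ‖g m‖ ^ 2 := by
    calc 8 * c * (c + 1) * L * (f y' - f z)
        ≤ 8 * c * (c + 1) * L * ((1 - 2 / (c + 1)) * (f y - f z) + 2 / (c + 1) * ⟪g m, u - z⟫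
          - 3 / (8 * L) * ‖g m‖ ^ 2) :=
          mul_le_mul_of_nonneg_left (by linarith) (by positivity)
      _ = _ := by
          field_simp
          ring
  have hdist : 32 * L ^ 2 * ‖u' - z‖ ^ 2
      = 32 * L ^ 2 * ‖u - z‖ ^ 2 - 16 * c * L * ⟪g m, u - z⟫ + 2 * c ^ 2 * ‖g m‖ ^ 2 := by
    rw [hu', sub_right_comm, norm_sub_sq_real, real_inner_smul_right, norm_smul,
      Real.norm_eq_abs, mul_pow, sq_abs, real_inner_comm]
    field_simp
    ring
  linarith [mul_nonneg (by linarith : 0 ≤ c) (sq_nonneg ‖g m‖)]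

theorem ag_potential_add_sum_le (hL₀ : 0 < L) (hg : ∀ x, HasGradientAt f (g x) x)
    (hL : ∀ x y, ‖g x - g y‖ ≤ L * ‖x - y‖) (hf : ConvexOn ℝ Set.univ f) {α β lam : ℕ → ℝ}
    (hα : ∀ k ≥ 1, α k = 2 / ((k : ℝ) + 1)) (hβ : ∀ k ≥ 1, β k = 1 / (2 * L))
    (hlam : ∀ k ≥ 1, lam k = (k : ℝ) * β k / 2) {x xag xmd : ℕ → E}
    (hmd : ∀ k ≥ 1, xmd k = (1 - α k) • xag (k - 1) + α k • x (k - 1))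
    (hx : ∀ k ≥ 1, x k = x (k - 1) - lam k • g (xmd k))
    (hxag : ∀ k ≥ 1, xag k = xmd k - β k • g (xmd k)) (z : E) (N : ℕ) :
    8 * N * (N + 1) * L * (f (xag N) - f z) + 32 * L ^ 2 * ‖x N - z‖ ^ 2
      + ∑ k ∈ Icc 1 N, (k : ℝ) * (k + 1) * ‖g (xmd k)‖ ^ 2 ≤ 32 * L ^ 2 * ‖x 0 - z‖ ^ 2 := by
  have := add_sum_Icc_le_of_forall_succ (N := N)
    (a := fun j ↦ 8 * j * (j + 1) * L * (f (xag j) - f z) + 32 * L ^ 2 * ‖x j - z‖ ^ 2)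
    (b := fun k ↦ (k : ℝ) * (k + 1) * ‖g (xmd k)‖ ^ 2) fun k ↦ by
      have hk : k + 1 ≥ 1 := by omega
      have hm := hmd _ hk
      have hu := hx _ hk
      have hy := hxag _ hk
      rw [hα _ hk] at hm
      rw [hlam _ hk, hβ _ hk, show ((k + 1 : ℕ) : ℝ) * (1 / (2 * L)) / 2
        = ((k + 1 : ℕ) : ℝ) / (4 * L) by field_simp; ring] at hu
      rw [hβ _ hk] at hy
      have h := ag_potential_step hL₀ hg hL hf (by simp) hm hu hy z
      simp only [add_tsub_cancel_right] at h
      push_cast at h ⊢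
      linear_combination h
  simpa using this

end

theorem ag_convex_rate_general {n : ℕ}
    (Ψ : EuclideanSpace ℝ (Fin n) → ℝ) (g : EuclideanSpace ℝ (Fin n) → EuclideanSpace ℝ (Fin n))
    (LΨ : ℝ) (hLΨ : 0 < LΨ)
    (hg : ∀ x, HasGradientAt Ψ (g x) x)
    (hL : ∀ x y, ‖g x - g y‖ ≤ LΨ * ‖x - y‖)
    (hconv : ConvexOn ℝ Set.univ Ψ)
    (xstar : EuclideanSpace ℝ (Fin n)) (hmin : ∀ z, Ψ xstar ≤ Ψ z)
    (α β lam : ℕ → ℝ)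
    (hα : ∀ k ≥ 1, α k = 2 / ((k : ℝ) + 1))
    (hβ : ∀ k ≥ 1, β k = 1 / (2 * LΨ))
    (hlam : ∀ k ≥ 1, lam k = (k : ℝ) * β k / 2)
    (x xag xmd : ℕ → EuclideanSpace ℝ (Fin n))
    (hmd : ∀ k ≥ 1, xmd k = (1 - α k) • xag (k - 1) + α k • x (k - 1))
    (hx : ∀ k ≥ 1, x k = x (k - 1) - lam k • g (xmd k))
    (hxag : ∀ k ≥ 1, xag k = xmd k - β k • g (xmd k)) :
    ∀ N : ℕ, 1 ≤ N →
      (Ψ (xag N) - Ψ xstar ≤ 4 * LΨ * ‖x 0 - xstar‖ ^ 2 / ((N : ℝ) * ((N : ℝ) + 1))) ∧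
      ∃ k ∈ Finset.Icc 1 N,
        ‖g (xmd k)‖ ^ 2 ≤ 96 * LΨ ^ 2 * ‖x 0 - xstar‖ ^ 2 / ((N : ℝ) ^ 2 * ((N : ℝ) + 1)) := by
  intro N hN
  have hdecay := ag_potential_add_sum_le hLΨ hg hL hconv hα hβ hlam hmd hx hxag xstar N
  have hN₀ : (0 : ℝ) < N := by exact_mod_cast hN
  have hsum_nonneg : 0 ≤ ∑ k ∈ Icc 1 N, (k : ℝ) * (k + 1) * ‖g (xmd k)‖ ^ 2 := by positivity
  have hpot_nonneg : 0 ≤ 8 * N * (N + 1) * LΨ * (Ψ (xag N) - Ψ xstar)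
      + 32 * LΨ ^ 2 * ‖x N - xstar‖ ^ 2 :=
    add_nonneg (mul_nonneg (by positivity) (sub_nonneg.2 (hmin _))) (by positivity)
  constructor
  · rw [le_div_iff₀ (by positivity)]
    nlinarith [sq_nonneg ‖x N - xstar‖]
  · refine exists_le_of_sum_mul_le_mul_sum (w := fun k ↦ (k : ℝ) * (k + 1))
      ⟨1, mem_Icc.2 ⟨le_rfl, hN⟩⟩ (fun k hk ↦ ?_) ?_
    · have : (1 : ℝ) ≤ k := by exact_mod_cast (mem_Icc.1 hk).1
      positivity
    · rw [sum_Icc_mul_add_one]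
      calc ∑ k ∈ Icc 1 N, (k : ℝ) * (k + 1) * ‖g (xmd k)‖ ^ 2
          ≤ 32 * LΨ ^ 2 * ‖x 0 - xstar‖ ^ 2 := by linarith
        _ ≤ 32 * LΨ ^ 2 * ‖x 0 - xstar‖ ^ 2 * ((N + 2) / N) :=
          le_mul_of_one_le_right (by positivity) ((one_le_div hN₀).2 (by linarith))
        _ = _ := by
          field_simp
          ring

theorem ag_convex_rate {n : ℕ}
    (Ψ : EuclideanSpace ℝ (Fin n) → ℝ) (g : EuclideanSpace ℝ (Fin n) → EuclideanSpace ℝ (Fin n))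
    (LΨ : ℝ) (hLΨ : 0 < LΨ)
    (hg : ∀ x, HasGradientAt Ψ (g x) x)
    (hL : ∀ x y, ‖g x - g y‖ ≤ LΨ * ‖x - y‖)
    (hconv : ConvexOn ℝ Set.univ Ψ)
    (xstar : EuclideanSpace ℝ (Fin n)) (hmin : ∀ z, Ψ xstar ≤ Ψ z)
    (α β lam : ℕ → ℝ)
    (hα : ∀ k ≥ 1, α k = 2 / ((k : ℝ) + 1))
    (hβ : ∀ k ≥ 1, β k = 1 / (2 * LΨ))
    (hlam : ∀ k ≥ 1, lam k = (k : ℝ) * β k / 2)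
    (x xag xmd : ℕ → EuclideanSpace ℝ (Fin n))
    (hag0 : xag 0 = x 0)
    (hmd : ∀ k ≥ 1, xmd k = (1 - α k) • xag (k - 1) + α k • x (k - 1))
    (hx : ∀ k ≥ 1, x k = x (k - 1) - lam k • g (xmd k))
    (hxag : ∀ k ≥ 1, xag k = xmd k - β k • g (xmd k)) :
    ∀ N : ℕ, 1 ≤ N →
      (Ψ (xag N) - Ψ xstar ≤ 4 * LΨ * ‖x 0 - xstar‖ ^ 2 / ((N : ℝ) * ((N : ℝ) + 1))) ∧
      ∃ k ∈ Finset.Icc 1 N,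
        ‖g (xmd k)‖ ^ 2 ≤ 96 * LΨ ^ 2 * ‖x 0 - xstar‖ ^ 2 / ((N : ℝ) ^ 2 * ((N : ℝ) + 1)) :=
  ag_convex_rate_general Ψ g LΨ hLΨ hg hL hconv xstar hmin α β lam hα hβ hlam x xag xmd hmd hx hxag
end

section
/- In the AG algorithm, the iterates satisfy the identity $x_k^{ag} - x_k = \Gamma_k\sum_{\tau=1}^k \frac{\lambda_\tau - \beta_\tau}{\Gamma_\tau}\nabla\Psi(x_\tau^{md})$, and consequently, by Jensen's inequality applied to $\|\cdot\|^2$ with weights $\Gamma_k\alpha_\tau/\Gamma_\tau$, $\|x_k^{ag} - x_k\|^2 \le \Gamma_k\sum_{\tau=1}^k \frac{(\lambda_\tau - \beta_\tau)^2}{\Gamma_\tau\alpha_\tau}\|\nabla\Psi(x_\tau^{md})\|^2$. -/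
/-!
Since `x_k^md - x_{k-1} = (1 - α_k)(x_{k-1}^ag - x_{k-1})`, the gap obeys the linear recursion
`x_k^ag - x_k = (1 - α_k)(x_{k-1}^ag - x_{k-1}) + (λ_k - β_k) ∇Ψ(x_k^md)`. Dividing by `Γ_k`
telescopes this recursion into the identity. The bound is Jensen's inequality for `‖·‖²` with the
weights `Γ_k α_τ / Γ_τ`, which sum to one because the constant sequence `1` obeys the same
recursion with forcing term `α_k`.
-/

open Finset

theorem pos_of_eq_one_sub_mul {α Γ : ℕ → ℝ} (hΓ1 : Γ 1 = 1)
    (hΓ : ∀ k ≥ 2, Γ k = (1 - α k) * Γ (k - 1)) (hα : ∀ k ≥ 2, α k < 1) :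
    ∀ k ≥ 1, 0 < Γ k := by
  intro k hk
  induction k, hk using Nat.le_induction with
  | base => simp [hΓ1]
  | succ k hk ih =>
    rw [hΓ (k + 1) (by omega), Nat.add_sub_cancel]
    exact mul_pos (by linarith [hα (k + 1) (by omega)]) ih

theorem eq_smul_sum_Icc_of_linear_rec {𝕜 E : Type*} [Field 𝕜] [AddCommGroup E] [Module 𝕜 E]
    {a Γ : ℕ → 𝕜} {d v : ℕ → E} (hΓ0 : ∀ k ≥ 1, Γ k ≠ 0) (hΓ1 : Γ 1 = 1)
    (hΓ : ∀ k ≥ 2, Γ k = a k * Γ (k - 1)) (hd1 : d 1 = v 1)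
    (hd : ∀ k ≥ 2, d k = a k • d (k - 1) + v k) :
    ∀ k ≥ 1, d k = Γ k • ∑ τ ∈ Icc 1 k, (Γ τ)⁻¹ • v τ := by
  intro k hk
  induction k, hk using Nat.le_induction with
  | base => simp [hd1, hΓ1]
  | succ k hk ih =>
    have hΓk : Γ (k + 1) = a (k + 1) * Γ k := by simpa using hΓ (k + 1) (by omega)
    rw [hd (k + 1) (by omega), Nat.add_sub_cancel, ih, sum_Icc_succ_top (by omega), smul_add,
      smul_smul, smul_smul, ← hΓk, mul_inv_cancel₀ (hΓ0 (k + 1) (by omega)), one_smul]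

theorem norm_sum_sq_le_sum_mul_sum_sq_div {ι E : Type*} [SeminormedAddCommGroup E]
    (s : Finset ι) (u : ι → E) {w : ι → ℝ} (hw : ∀ i ∈ s, 0 < w i) :
    ‖∑ i ∈ s, u i‖ ^ 2 ≤ (∑ i ∈ s, w i) * ∑ i ∈ s, ‖u i‖ ^ 2 / w i := by
  calc ‖∑ i ∈ s, u i‖ ^ 2 ≤ (∑ i ∈ s, ‖u i‖) ^ 2 := by gcongr; exact norm_sum_le s u
    _ ≤ _ := sum_sq_le_sum_mul_sum_of_sq_le_mul s (fun i hi => (hw i hi).le)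
        (fun i hi => div_nonneg (sq_nonneg _) (hw i hi).le)
        (fun i hi => (mul_div_cancel₀ _ (hw i hi).ne').ge)

theorem norm_smul_sum_sq_le_of_mul_sum_eq_one {ι E : Type*} [SeminormedAddCommGroup E]
    [NormedSpace ℝ E] (s : Finset ι) (u : ι → E) {w : ι → ℝ} {c : ℝ} (hw : ∀ i ∈ s, 0 < w i)
    (hc : c * ∑ i ∈ s, w i = 1) :
    ‖c • ∑ i ∈ s, u i‖ ^ 2 ≤ c * ∑ i ∈ s, ‖u i‖ ^ 2 / w i := by
  calc ‖c • ∑ i ∈ s, u i‖ ^ 2 = c ^ 2 * ‖∑ i ∈ s, u i‖ ^ 2 := by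
        rw [norm_smul, mul_pow, Real.norm_eq_abs, sq_abs]
    _ ≤ c ^ 2 * ((∑ i ∈ s, w i) * ∑ i ∈ s, ‖u i‖ ^ 2 / w i) := by
        gcongr; exact norm_sum_sq_le_sum_mul_sum_sq_div s u hw
    _ = (c * ∑ i ∈ s, w i) * (c * ∑ i ∈ s, ‖u i‖ ^ 2 / w i) := by ring
    _ = c * ∑ i ∈ s, ‖u i‖ ^ 2 / w i := by rw [hc, one_mul]

theorem ag_iterate_identity_general {n : ℕ}
    (g : EuclideanSpace ℝ (Fin n) → EuclideanSpace ℝ (Fin n))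
    (α β lam Γ : ℕ → ℝ)
    (hα1 : α 1 = 1) (hα : ∀ k ≥ 2, α k ∈ Set.Ioo (0:ℝ) 1)
    (hΓ1 : Γ 1 = 1) (hΓ : ∀ k ≥ 2, Γ k = (1 - α k) * Γ (k - 1))
    (x xag xmd : ℕ → EuclideanSpace ℝ (Fin n))
    (hmd : ∀ k ≥ 1, xmd k = (1 - α k) • xag (k - 1) + α k • x (k - 1))
    (hx : ∀ k ≥ 1, x k = x (k - 1) - lam k • g (xmd k))
    (hxag : ∀ k ≥ 1, xag k = xmd k - β k • g (xmd k)) :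
    ∀ k ≥ 1,
      (xag k - x k = Γ k • ∑ τ ∈ Finset.Icc 1 k, ((lam τ - β τ) / Γ τ) • g (xmd τ)) ∧
      ‖xag k - x k‖ ^ 2 ≤
        Γ k * ∑ τ ∈ Finset.Icc 1 k, (lam τ - β τ) ^ 2 / (Γ τ * α τ) * ‖g (xmd τ)‖ ^ 2 := by
  have hαpos : ∀ k ≥ 1, 0 < α k := fun k hk =>
    (eq_or_lt_of_le hk).elim (fun h => h ▸ hα1 ▸ one_pos) (fun h => (hα k h).1)
  have hΓpos := pos_of_eq_one_sub_mul hΓ1 hΓ fun k hk => (hα k hk).2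
  have hΓ0 : ∀ k ≥ 1, Γ k ≠ 0 := fun k hk => (hΓpos k hk).ne'
  have hgap : ∀ k ≥ 1, xag k - x k =
      (1 - α k) • (xag (k - 1) - x (k - 1)) + (lam k - β k) • g (xmd k) := fun k hk => by
    rw [hxag k hk, hx k hk, hmd k hk]; module
  have hid := eq_smul_sum_Icc_of_linear_rec hΓ0 hΓ1 hΓ (by simpa [hα1] using hgap 1 le_rfl)
    fun k hk => hgap k (by omega)
  have hweights := eq_smul_sum_Icc_of_linear_rec (d := fun _ => (1 : ℝ)) hΓ0 hΓ1 hΓ hα1.symm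
    fun k _ => by simp
  simp only [smul_smul, inv_mul_eq_div, smul_eq_mul] at hid hweights
  intro k hk
  have hmem : ∀ τ ∈ Icc 1 k, 1 ≤ τ := fun τ hτ => (mem_Icc.1 hτ).1
  refine ⟨hid k hk, ?_⟩
  calc ‖xag k - x k‖ ^ 2
      ≤ Γ k * ∑ τ ∈ Icc 1 k, ‖((lam τ - β τ) / Γ τ) • g (xmd τ)‖ ^ 2 / (α τ / Γ τ) := by
        rw [hid k hk]
        exact norm_smul_sum_sq_le_of_mul_sum_eq_one _ _
          (fun τ hτ => div_pos (hαpos τ (hmem τ hτ)) (hΓpos τ (hmem τ hτ))) (hweights k hk).symm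
    _ = _ := by
        refine congrArg _ (sum_congr rfl fun τ hτ => ?_)
        have := hΓ0 τ (hmem τ hτ)
        have := (hαpos τ (hmem τ hτ)).ne'
        rw [norm_smul, mul_pow, Real.norm_eq_abs, sq_abs]
        field_simp

theorem ag_iterate_identity {n : ℕ}
    (Ψ : EuclideanSpace ℝ (Fin n) → ℝ) (g : EuclideanSpace ℝ (Fin n) → EuclideanSpace ℝ (Fin n))
    (hg : ∀ x, HasGradientAt Ψ (g x) x)
    (α β lam Γ : ℕ → ℝ)
    (hα1 : α 1 = 1) (hα : ∀ k ≥ 2, α k ∈ Set.Ioo (0:ℝ) 1)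
    (hβ : ∀ k ≥ 1, 0 < β k) (hlam : ∀ k ≥ 1, 0 < lam k)
    (hΓ1 : Γ 1 = 1) (hΓ : ∀ k ≥ 2, Γ k = (1 - α k) * Γ (k - 1))
    (x xag xmd : ℕ → EuclideanSpace ℝ (Fin n))
    (hag0 : xag 0 = x 0)
    (hmd : ∀ k ≥ 1, xmd k = (1 - α k) • xag (k - 1) + α k • x (k - 1))
    (hx : ∀ k ≥ 1, x k = x (k - 1) - lam k • g (xmd k))
    (hxag : ∀ k ≥ 1, xag k = xmd k - β k • g (xmd k)) :
    ∀ k ≥ 1,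
      (xag k - x k = Γ k • ∑ τ ∈ Finset.Icc 1 k, ((lam τ - β τ) / Γ τ) • g (xmd τ)) ∧
      ‖xag k - x k‖ ^ 2 ≤
        Γ k * ∑ τ ∈ Finset.Icc 1 k, (lam τ - β τ) ^ 2 / (Γ τ * α τ) * ‖g (xmd τ)‖ ^ 2 :=
  ag_iterate_identity_general g α β lam Γ hα1 hα hΓ1 hΓ x xag xmd hmd hx hxag
end
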